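/- The box polarization of the square of the maximal ideal: the ideal B generated by the monomials x_i^{(1)} x_j^{(2)} for all 1 ≤ i ≤ j ≤ n in the polynomial ring k[x_1^{(1)},…,x_n^{(1)}, x_1^{(2)},…,x_n^{(2)}] is a polarization of the ideal (x_1,…,x_n)^2 ⊆ k[x_1,…,x_n]. -/

import Mathlib

open MvPolynomial

/-- A squarefree monomial ideal: an ideal generated by squarefree monomials. -/
def IsSqFreeMonomialIdeal {k : Type*} [Field k] {V : Type*}
    (I : Ideal (MvPolynomial V k)) : Prop :=
  ∃ G : Set (Finset V),
    I = Ideal.span ((fun σ : Finset V => ∏ v ∈ σ, (X v : MvPolynomial V k)) '' G)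

/-- The list of differences `x_i^(1) - x_i^(j)`, `2 ≤ j ≤ r i`. -/
noncomputable def polDiffs (k : Type*) [Field k] {n : ℕ} (r : Fin n → ℕ) :
    List (MvPolynomial ((i : Fin n) × Fin (r i)) k) :=
  (List.finRange n).flatMap fun i =>
    (((List.finRange (r i)).filter fun j => 0 < j.val).map fun j =>
      X ⟨i, ⟨0, Nat.lt_of_le_of_lt (Nat.zero_le _) j.isLt⟩⟩ - X ⟨i, j⟩)

/-- `J` is a polarization of `I`. -/
def IsPolarization {k : Type*} [Field k] {n : ℕ} (r : Fin n → ℕ)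
    (I : Ideal (MvPolynomial (Fin n) k))
    (J : Ideal (MvPolynomial ((i : Fin n) × Fin (r i)) k)) : Prop :=
  IsSqFreeMonomialIdeal J ∧
  RingTheory.Sequence.IsRegular (MvPolynomial ((i : Fin n) × Fin (r i)) k ⧸ J) (polDiffs k r) ∧
  Ideal.map (MvPolynomial.rename Sigma.fst :
      MvPolynomial ((i : Fin n) × Fin (r i)) k →ₐ[k] MvPolynomial (Fin n) k) J = I

/-- The Alexander dual of a squarefree monomial ideal. -/
noncomputable def alexDual {k : Type*} [Field k] {V : Type*} [DecidableEq V]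
    (J : Ideal (MvPolynomial V k)) : Ideal (MvPolynomial V k) :=
  Ideal.span {m | ∃ τ : Finset V, m = ∏ v ∈ τ, X v ∧
    ∀ σ : Finset V, (∏ v ∈ σ, (X v : MvPolynomial V k)) ∈ J → (τ ∩ σ).Nonempty}

/-- `I_d`, generated by all squarefree monomials of degree `d`. -/
noncomputable def sqfPow (k : Type*) [Field k] (n d : ℕ) : Ideal (MvPolynomial (Fin n) k) :=
  Ideal.span {m | ∃ σ : Finset (Fin n), σ.card = d ∧ m = ∏ i ∈ σ, X i}

namespace BoxPol
open Finsupp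

lemma mk_eq_iff {n : ℕ} {i j : Fin n} {a b : Fin 2} :
    (⟨i, a⟩ : (i : Fin n) × Fin 2) = ⟨j, b⟩ ↔ i = j ∧ a = b := by
  simp

variable (k : Type*) [Field k] (n : ℕ)

noncomputable def dd (i : Fin n) : MvPolynomial ((i : Fin n) × Fin 2) k := X ⟨i, 0⟩ - X ⟨i, 1⟩

def Bgens : Set (MvPolynomial ((i : Fin n) × Fin 2) k) :=
  {m | ∃ i j : Fin n, i ≤ j ∧ m = X ⟨i, 0⟩ * X ⟨j, 1⟩}

noncomputable def BB : Ideal (MvPolynomial ((i : Fin n) × Fin 2) k) := Ideal.span (Bgens k n)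

def Sm (m : ℕ) : Set (((i : Fin n) × Fin 2) →₀ ℕ) :=
  {e | ∃ i j : Fin n, i ≤ j ∧
    e = Finsupp.single ⟨i, 0⟩ 1 + Finsupp.single ⟨j, if (j : ℕ) < m then 0 else 1⟩ 1}

noncomputable def Bm (m : ℕ) : Ideal (MvPolynomial ((i : Fin n) × Fin 2) k) :=
  Ideal.span ((fun s => monomial s (1 : k)) '' Sm n m)

noncomputable def Dm (m : ℕ) : Ideal (MvPolynomial ((i : Fin n) × Fin 2) k) :=
  Ideal.span (dd k n '' {j : Fin n | (j : ℕ) < m})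

noncomputable def pim (m : ℕ) :
    MvPolynomial ((i : Fin n) × Fin 2) k →ₐ[k] MvPolynomial ((i : Fin n) × Fin 2) k :=
  aeval (fun v => if (v.1 : ℕ) < m ∧ v.2 = 1 then X ⟨v.1, 0⟩ else X v)

lemma XX (a b : (i : Fin n) × Fin 2) :
    (X a * X b : MvPolynomial ((i : Fin n) × Fin 2) k)
      = monomial (Finsupp.single a 1 + Finsupp.single b 1) 1 := by
  rw [X, X, monomial_mul, one_mul]

lemma pim_X (m : ℕ) (v : (i : Fin n) × Fin 2) :
    pim k n m (X v) = if (v.1 : ℕ) < m ∧ v.2 = 1 then X ⟨v.1, 0⟩ else X v := aeval_X _ _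

lemma pim_X0 (m : ℕ) (i : Fin n) : pim k n m (X ⟨i, 0⟩) = X ⟨i, 0⟩ := by
  rw [pim_X]
  have h : ((⟨i, 0⟩ : (i : Fin n) × Fin 2)).2 ≠ 1 := by show (0 : Fin 2) ≠ 1; decide
  rw [if_neg (fun hc => h hc.2)]

lemma pim_X1 (m : ℕ) (j : Fin n) :
    pim k n m (X ⟨j, 1⟩) = if (j : ℕ) < m then X ⟨j, 0⟩ else X ⟨j, 1⟩ := by
  rw [pim_X]
  by_cases h : (j : ℕ) < m <;> simp [h]

lemma pim_dd_lt {m : ℕ} {j : Fin n} (h : (j : ℕ) < m) : pim k n m (dd k n j) = 0 := by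
  rw [dd, map_sub, pim_X0, pim_X1, if_pos h, sub_self]

lemma pim_dd_ge {m : ℕ} {j : Fin n} (h : ¬ (j : ℕ) < m) : pim k n m (dd k n j) = dd k n j := by
  rw [dd, map_sub, pim_X0, pim_X1, if_neg h]


lemma map_BB_le (m : ℕ) : Ideal.map (pim k n m) (BB k n) ≤ Bm k n m := by
  rw [BB, Ideal.map_span, Ideal.span_le]
  rintro _ ⟨_, ⟨i, j, hij, rfl⟩, rfl⟩
  apply Ideal.subset_span
  refine ⟨Finsupp.single ⟨i, 0⟩ 1 + Finsupp.single ⟨j, if (j : ℕ) < m then 0 else 1⟩ 1,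
    ⟨i, j, hij, rfl⟩, ?_⟩
  beta_reduce
  rw [map_mul, pim_X0, pim_X1, ← XX]
  by_cases h : (j : ℕ) < m <;> simp [h]

lemma map_Bm_le (m : ℕ) : Ideal.map (pim k n m) (Bm k n m) ≤ Bm k n m := by
  rw [Bm, Ideal.map_span, Ideal.span_le]
  rintro _ ⟨_, ⟨s, ⟨i, j, hij, rfl⟩, rfl⟩, rfl⟩
  beta_reduce
  rw [← XX, map_mul, pim_X0]
  by_cases h : (j : ℕ) < m
  · rw [if_pos h, pim_X0, XX]
    exact Ideal.subset_span ⟨_, ⟨i, j, hij, by rw [if_pos h]⟩, rfl⟩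
  · rw [if_neg h, pim_X1, if_neg h, XX]
    exact Ideal.subset_span ⟨_, ⟨i, j, hij, by rw [if_neg h]⟩, rfl⟩

lemma map_Dm_le (m : ℕ) : Ideal.map (pim k n m) (Dm k n m) ≤ ⊥ := by
  rw [Dm, Ideal.map_span, Ideal.span_le]
  rintro _ ⟨_, ⟨j, hj, rfl⟩, rfl⟩
  rw [pim_dd_lt k n hj]
  exact Ideal.zero_mem ⊥

lemma Bm_le (m : ℕ) : Bm k n m ≤ BB k n ⊔ Dm k n m := by
  rw [Bm, Ideal.span_le]
  rintro _ ⟨s, ⟨i, j, hij, rfl⟩, rfl⟩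
  beta_reduce
  rw [← XX]
  by_cases h : (j : ℕ) < m
  · rw [if_pos h]
    have heq : (X ⟨i, 0⟩ * X ⟨j, 0⟩ : MvPolynomial ((i : Fin n) × Fin 2) k)
        = X ⟨i, 0⟩ * X ⟨j, 1⟩ + X ⟨i, 0⟩ * dd k n j := by rw [dd]; ring
    rw [heq]
    exact add_mem (Ideal.mem_sup_left (Ideal.subset_span ⟨i, j, hij, rfl⟩))
      (Ideal.mem_sup_right (Ideal.mul_mem_left _ _ (Ideal.subset_span ⟨j, h, rfl⟩)))
  · rw [if_neg h]
    exact Ideal.mem_sup_left (Ideal.subset_span ⟨i, j, hij, rfl⟩)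

lemma sub_pim_mem (m : ℕ) (f : MvPolynomial ((i : Fin n) × Fin 2) k) :
    f - pim k n m f ∈ Dm k n m := by
  induction f using MvPolynomial.induction_on with
  | C a => rw [pim]; rw [aeval_C]; rw [algebraMap_eq]; rw [sub_self]; exact zero_mem _
  | add p q hp hq =>
    have : p + q - pim k n m (p + q) = (p - pim k n m p) + (q - pim k n m q) := by
      rw [map_add]; ring
    rw [this]; exact add_mem hp hq
  | mul_X p v hp =>
    have : p * X v - pim k n m (p * X v)
        = (p - pim k n m p) * X v + pim k n m p * (X v - pim k n m (X v)) := by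
      rw [map_mul]; ring
    rw [this]
    refine add_mem (Ideal.mul_mem_right _ _ hp) (Ideal.mul_mem_left _ _ ?_)
    rcases v with ⟨i, c⟩
    by_cases h : (i : ℕ) < m ∧ c = 1
    · obtain ⟨h1, rfl⟩ := h
      rw [pim_X1, if_pos h1]
      have : (X ⟨i, 1⟩ - X ⟨i, 0⟩ : MvPolynomial ((i : Fin n) × Fin 2) k) = -(dd k n i) := by
        rw [dd]; ring
      rw [this]
      exact neg_mem (Ideal.subset_span ⟨i, h1, rfl⟩)
    · rw [pim_X, if_neg h, sub_self]
      exact zero_mem _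

lemma mem_sup_iff (m : ℕ) (f : MvPolynomial ((i : Fin n) × Fin 2) k) :
    f ∈ BB k n ⊔ Dm k n m ↔ pim k n m f ∈ Bm k n m := by
  constructor
  · intro hf
    have h1 : pim k n m f ∈ Ideal.map (pim k n m) (BB k n ⊔ Dm k n m) :=
      Ideal.mem_map_of_mem _ hf
    rw [Ideal.map_sup] at h1
    have h2 : Ideal.map (pim k n m) (BB k n) ⊔ Ideal.map (pim k n m) (Dm k n m)
        ≤ Bm k n m := sup_le (map_BB_le k n m) ((map_Dm_le k n m).trans bot_le)
    exact h2 h1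
  · intro hf
    have : f = (f - pim k n m f) + pim k n m f := by ring
    rw [this]
    exact add_mem (Ideal.mem_sup_right (sub_pim_mem k n m f)) (Bm_le k n m hf)


lemma core (m : ℕ) (hm : m < n) (g : MvPolynomial ((i : Fin n) × Fin 2) k)
    (h : (X ⟨⟨m, hm⟩, 0⟩ - X ⟨⟨m, hm⟩, 1⟩) * g ∈ Bm k n m) : g ∈ Bm k n m := by
  set mi : Fin n := ⟨m, hm⟩ with hmi
  have hmival : (mi : ℕ) = m := rfl
  rw [Bm, mem_ideal_span_monomial_image] at h ⊢
  intro σ hσs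
  by_contra hc
  push_neg at hc
  have hstd : ∀ i j : Fin n, i ≤ j →
      ¬ (Finsupp.single (⟨i, 0⟩ : (i : Fin n) × Fin 2) 1
          + Finsupp.single ⟨j, if (j : ℕ) < m then 0 else 1⟩ 1 ≤ σ) := by
    intro i j hij hle
    exact hc _ ⟨i, j, hij, rfl⟩ hle
  rw [MvPolynomial.mem_support_iff] at hσs
  by_cases hlow : ∀ i : Fin n, i ≤ mi → σ ⟨i, 0⟩ = 0
  · set τ := σ + Finsupp.single (⟨mi, 1⟩ : (i : Fin n) × Fin 2) 1 with hτ
    have hne10 : ∀ i : Fin n, (⟨mi, 1⟩ : (i : Fin n) × Fin 2) ≠ ⟨i, 0⟩ := by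
      intro i hx
      exact absurd (mk_eq_iff.mp hx).2 (by decide)
    have hτu : τ ⟨mi, 0⟩ = 0 := by
      rw [hτ, Finsupp.add_apply, Finsupp.single_apply, if_neg (hne10 mi), hlow mi le_rfl]
      omega
    have hτv : τ ⟨mi, 1⟩ ≠ 0 := by
      rw [hτ, Finsupp.add_apply, Finsupp.single_apply, if_pos rfl]
      omega
    have h1 : coeff τ (X (⟨mi, 0⟩ : (i : Fin n) × Fin 2) * g) = 0 := by
      have hns : (⟨mi, 0⟩ : (i : Fin n) × Fin 2) ∉ τ.support := by
        rw [Finsupp.mem_support_iff, not_not]; exact hτu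
      rw [coeff_X_mul', if_neg hns]
    have h2 : coeff τ (X (⟨mi, 1⟩ : (i : Fin n) × Fin 2) * g) = coeff σ g := by
      rw [coeff_X_mul', if_pos (Finsupp.mem_support_iff.mpr hτv), hτ, add_tsub_cancel_right]
    have hτmem : τ ∈ ((X (⟨mi, 0⟩ : (i : Fin n) × Fin 2) - X (⟨mi, 1⟩ : (i : Fin n) × Fin 2)) * g).support := by
      rw [MvPolynomial.mem_support_iff, sub_mul, coeff_sub, h1, h2, zero_sub, neg_ne_zero]
      exact hσs
    obtain ⟨s, ⟨i, j, hij, rfl⟩, hsle⟩ := h τ hτmem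
    have hσi : 1 ≤ σ ⟨i, 0⟩ := by
      have hx := Finsupp.le_def.mp hsle ⟨i, 0⟩
      rw [Finsupp.add_apply, hτ, Finsupp.add_apply] at hx
      rw [Finsupp.single_apply, if_pos rfl] at hx
      rw [Finsupp.single_apply (a := (⟨mi, 1⟩ : (i : Fin n) × Fin 2)), if_neg (hne10 i)] at hx
      rw [Finsupp.single_apply] at hx
      split_ifs at hx <;> omega
    by_cases hi : i ≤ mi
    · have := hlow i hi; omega
    · have hmiv : m < (i : ℕ) := by
        rw [not_le, Fin.lt_def, hmival] at hi; exact hi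
      have hjm : ¬ (j : ℕ) < m := by
        have := Fin.le_def.mp hij; omega
      apply hstd i j hij
      rw [if_neg hjm]
      rw [if_neg hjm] at hsle
      rw [Finsupp.le_def]
      intro x
      have hx := Finsupp.le_def.mp hsle x
      by_cases hxv : x = ⟨mi, 1⟩
      · subst hxv
        have e1 : (⟨i, 0⟩ : (i : Fin n) × Fin 2) ≠ ⟨mi, 1⟩ := by
          intro hx2; exact absurd (mk_eq_iff.mp hx2).2 (by decide)
        have e2 : (⟨j, 1⟩ : (i : Fin n) × Fin 2) ≠ ⟨mi, 1⟩ := by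
          intro hx2
          have hj1 := congrArg (fun z => (Fin.val z.1 : ℕ)) hx2
          simp only [hmival] at hj1
          have := Fin.le_def.mp hij
          omega
        rw [Finsupp.add_apply, Finsupp.single_apply, Finsupp.single_apply, if_neg e1, if_neg e2]
        simp
      · have hτx : τ x = σ x := by
          rw [hτ, Finsupp.add_apply, Finsupp.single_apply, if_neg (fun hh => hxv hh.symm), add_zero]
        rw [hτx] at hx
        exact hx
  · push_neg at hlow
    obtain ⟨i₀, hi₀le, hi₀⟩ := hlow
    have hclaim : ∀ j : Fin n, mi ≤ j → σ ⟨j, 1⟩ = 0 := by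
      intro j hj
      by_contra hne
      have hjm : ¬ (j : ℕ) < m := by
        have := Fin.le_def.mp hj; omega
      apply hstd i₀ j (le_trans hi₀le hj)
      rw [if_neg hjm, Finsupp.le_def]
      intro x
      rw [Finsupp.add_apply, Finsupp.single_apply, Finsupp.single_apply]
      split_ifs with h1 h2 h2
      · exact absurd (mk_eq_iff.mp (h1.trans h2.symm)).2 (by decide)
      · subst h1; omega
      · subst h2; omega
      · omega
    set τ := σ + Finsupp.single (⟨mi, 0⟩ : (i : Fin n) × Fin 2) 1 with hτ
    have e01 : (⟨mi, 0⟩ : (i : Fin n) × Fin 2) ≠ ⟨mi, 1⟩ := by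
      intro hx; exact absurd (mk_eq_iff.mp hx).2 (by decide)
    have hτv : τ ⟨mi, 1⟩ = 0 := by
      rw [hτ, Finsupp.add_apply, Finsupp.single_apply, if_neg e01, hclaim mi le_rfl]
      omega
    have h1 : coeff τ (X (⟨mi, 1⟩ : (i : Fin n) × Fin 2) * g) = 0 := by
      have hns : (⟨mi, 1⟩ : (i : Fin n) × Fin 2) ∉ τ.support := by
        rw [Finsupp.mem_support_iff, not_not]; exact hτv
      rw [coeff_X_mul', if_neg hns]
    have h2 : coeff τ (X (⟨mi, 0⟩ : (i : Fin n) × Fin 2) * g) = coeff σ g := by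
      have hτu : τ ⟨mi, 0⟩ ≠ 0 := by
        rw [hτ, Finsupp.add_apply, Finsupp.single_apply, if_pos rfl]; omega
      rw [coeff_X_mul', if_pos (Finsupp.mem_support_iff.mpr hτu), hτ, add_tsub_cancel_right]
    have hτmem : τ ∈ ((X (⟨mi, 0⟩ : (i : Fin n) × Fin 2) - X (⟨mi, 1⟩ : (i : Fin n) × Fin 2)) * g).support := by
      rw [MvPolynomial.mem_support_iff, sub_mul, coeff_sub, h1, h2, sub_zero]
      exact hσs
    obtain ⟨s, ⟨i, j, hij, rfl⟩, hsle⟩ := h τ hτmem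
    by_cases hsu : ((Finsupp.single (⟨i, 0⟩ : (i : Fin n) × Fin 2) (1 : ℕ)
        + Finsupp.single (⟨j, if (j : ℕ) < m then 0 else 1⟩ : (i : Fin n) × Fin 2) 1 :
        ((i : Fin n) × Fin 2) →₀ ℕ)) ⟨mi, 0⟩ = 0
    · apply hstd i j hij
      rw [Finsupp.le_def]
      intro x
      have hx := Finsupp.le_def.mp hsle x
      by_cases hxu : x = ⟨mi, 0⟩
      · subst hxu
        rw [hsu]
        exact Nat.zero_le _
      · have hτx : τ x = σ x := by
          rw [hτ, Finsupp.add_apply, Finsupp.single_apply, if_neg (fun hh => hxu hh.symm), add_zero]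
        rw [hτx] at hx
        exact hx
    · by_cases hjc : (⟨j, if (j : ℕ) < m then 0 else 1⟩ : (i : Fin n) × Fin 2) = ⟨mi, 0⟩
      · have hj1 := congrArg (fun z => (Fin.val z.1 : ℕ)) hjc
        simp only [hmival] at hj1
        have hc0 := (mk_eq_iff.mp hjc).2
        by_cases hjm : (j : ℕ) < m
        · omega
        · rw [if_neg hjm] at hc0; exact absurd hc0 (by decide)
      · rw [Finsupp.add_apply, Finsupp.single_apply, Finsupp.single_apply, if_neg hjc] at hsu
        have hi0 : (⟨i, 0⟩ : (i : Fin n) × Fin 2) = ⟨mi, 0⟩ := by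
          by_cases hi0 : (⟨i, 0⟩ : (i : Fin n) × Fin 2) = ⟨mi, 0⟩
          · exact hi0
          · rw [if_neg hi0] at hsu; omega
        have hieq : (i : ℕ) = m := by
          have := congrArg (fun z => (Fin.val z.1 : ℕ)) hi0
          simpa [hmival] using this
        have hjm : ¬ (j : ℕ) < m := by
          have := Fin.le_def.mp hij; omega
        rw [if_neg hjm] at hsle
        have hx := Finsupp.le_def.mp hsle ⟨j, 1⟩
        have e1 : (⟨mi, 0⟩ : (i : Fin n) × Fin 2) ≠ ⟨j, 1⟩ := by
          intro hh; exact absurd (mk_eq_iff.mp hh).2 (by decide)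
        rw [Finsupp.add_apply, hτ, Finsupp.add_apply] at hx
        rw [Finsupp.single_apply (a := (⟨j, 1⟩ : (i : Fin n) × Fin 2)), if_pos rfl] at hx
        rw [Finsupp.single_apply (a := (⟨mi, 0⟩ : (i : Fin n) × Fin 2)), if_neg e1] at hx
        rw [Finsupp.single_apply] at hx
        have hσj : σ ⟨j, 1⟩ ≠ 0 := by split_ifs at hx <;> omega
        exact hσj (hclaim j (Fin.le_def.mpr (by omega)))


lemma flatMap_single {α β : Type*} (l : List α) (f : α → β) :
    (l.flatMap fun a => [f a]) = l.map f := by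
  induction l with
  | nil => rfl
  | cons a t ih => simp only [List.flatMap_cons, ih, List.map_cons, List.singleton_append]

lemma polDiffs_eq : polDiffs k (fun _ => 2 : Fin n → ℕ) = (List.finRange n).map (dd k n) := by
  have h2 : ((List.finRange 2).filter fun j : Fin 2 => decide (0 < j.val)) = [(1 : Fin 2)] := by
    decide
  rw [polDiffs]
  simp only [h2, List.map_cons, List.map_nil]
  rw [flatMap_single]
  rfl

lemma ofList_take (i : ℕ) :
    Ideal.ofList (((List.finRange n).map (dd k n)).take i) = Dm k n i := by
  have hset : {r | r ∈ ((List.finRange n).map (dd k n)).take i}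
      = dd k n '' {j : Fin n | (j : ℕ) < i} := by
    ext x
    simp only [Set.mem_setOf_eq, List.mem_take_iff_getElem, List.getElem_map,
      List.getElem_finRange, Set.mem_image]
    constructor
    · rintro ⟨a, ha, rfl⟩
      simp only [List.length_map, List.length_finRange, lt_min_iff] at ha
      exact ⟨⟨a, ha.2⟩, ha.1, rfl⟩
    · rintro ⟨⟨a, han⟩, hai, rfl⟩
      refine ⟨a, ?_, rfl⟩
      simp only [List.length_map, List.length_finRange, lt_min_iff]
      exact ⟨hai, han⟩
  rw [Ideal.ofList, hset, Dm]

lemma quot_mem_iff (J I : Ideal (MvPolynomial ((i : Fin n) × Fin 2) k))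
    (f : MvPolynomial ((i : Fin n) × Fin 2) k) :
    Ideal.Quotient.mk J f ∈ (I • (⊤ : Submodule (MvPolynomial ((i : Fin n) × Fin 2) k)
      (MvPolynomial ((i : Fin n) × Fin 2) k ⧸ J))) ↔ f ∈ J ⊔ I := by
  rw [Ideal.smul_top_eq_map, Submodule.restrictScalars_mem, Ideal.Quotient.algebraMap_eq,
    Ideal.mem_quotient_iff_mem_sup, sup_comm]


lemma weak : RingTheory.Sequence.IsWeaklyRegular
    (MvPolynomial ((i : Fin n) × Fin 2) k ⧸ BB k n) ((List.finRange n).map (dd k n)) := by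
  rw [RingTheory.Sequence.isWeaklyRegular_iff]
  intro i hi
  simp only [List.length_map, List.length_finRange] at hi
  have hget : ((List.finRange n).map (dd k n))[i]'(by
      simp only [List.length_map, List.length_finRange]; exact hi) = dd k n ⟨i, hi⟩ := by
    simp
  rw [hget, ofList_take k n i, isSMulRegular_quotient_iff_mem_of_smul_mem]
  intro x hx
  obtain ⟨f, rfl⟩ := Ideal.Quotient.mk_surjective x
  rw [show dd k n ⟨i, hi⟩ • Ideal.Quotient.mk (BB k n) f
      = Ideal.Quotient.mk (BB k n) (dd k n ⟨i, hi⟩ * f) from rfl, quot_mem_iff] at hx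
  rw [quot_mem_iff]
  rw [mem_sup_iff] at hx ⊢
  rw [map_mul, pim_dd_ge k n (fun hlt => Nat.lt_irrefl i hlt)] at hx
  exact core k n i hi (pim k n i f) hx

lemma topne : (⊤ : Submodule (MvPolynomial ((i : Fin n) × Fin 2) k)
      (MvPolynomial ((i : Fin n) × Fin 2) k ⧸ BB k n))
    ≠ Ideal.ofList ((List.finRange n).map (dd k n)) • ⊤ := by
  intro hEq
  have h1 : Ideal.Quotient.mk (BB k n) 1 ∈ Ideal.ofList ((List.finRange n).map (dd k n)) •
      (⊤ : Submodule (MvPolynomial ((i : Fin n) × Fin 2) k)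
        (MvPolynomial ((i : Fin n) × Fin 2) k ⧸ BB k n)) := hEq ▸ Submodule.mem_top
  have hofl : Ideal.ofList ((List.finRange n).map (dd k n)) = Dm k n n := by
    rw [← ofList_take k n n]
    congr 1
    exact (List.take_of_length_le (by simp)).symm
  rw [hofl, quot_mem_iff] at h1
  have hker : BB k n ⊔ Dm k n n ≤ RingHom.ker
      (constantCoeff : MvPolynomial ((i : Fin n) × Fin 2) k →+* k) := by
    refine sup_le ?_ ?_
    · rw [BB, Ideal.span_le]
      rintro _ ⟨i, j, hij, rfl⟩
      simp [RingHom.mem_ker]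
    · rw [Dm, Ideal.span_le]
      rintro _ ⟨j, hj, rfl⟩
      simp [RingHom.mem_ker, dd]
  have h2 := hker h1
  rw [RingHom.mem_ker, map_one] at h2
  exact one_ne_zero h2

end BoxPol

open BoxPol

/-- The box polarization of the square of the maximal ideal: the ideal
generated by the monomials `x_i^{(1)} x_j^{(2)}` for `1 ≤ i ≤ j ≤ n` is a polarization of
`(x_1, …, x_n)^2`. -/
theorem box_polarization_of_square (k : Type*) [Field k] (n : ℕ) :
    IsPolarization (fun _ => 2)
      ((Ideal.span (Set.range (X : Fin n → MvPolynomial (Fin n) k))) ^ 2)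
      (Ideal.span {m | ∃ i j : Fin n, i ≤ j ∧
        m = X (⟨i, 0⟩ : (i : Fin n) × Fin 2) * X (⟨j, 1⟩ : (i : Fin n) × Fin 2)}) := by
  have hne : ∀ i j : Fin n, (⟨i, 0⟩ : (i : Fin n) × Fin 2) ≠ ⟨j, 1⟩ := by
    intro i j hx
    exact absurd (mk_eq_iff.mp hx).2 (by decide)
  refine ⟨⟨{σ : Finset ((i : Fin n) × Fin 2) | ∃ i j : Fin n, i ≤ j ∧ σ = {⟨i, 0⟩, ⟨j, 1⟩}},
    ?_⟩, ?_, ?_⟩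
  · congr 1
    ext p
    constructor
    · rintro ⟨i, j, hij, rfl⟩
      exact ⟨{⟨i, 0⟩, ⟨j, 1⟩}, ⟨i, j, hij, rfl⟩, by beta_reduce; rw [Finset.prod_pair (hne i j)]⟩
    · rintro ⟨σ, ⟨i, j, hij, rfl⟩, rfl⟩
      exact ⟨i, j, hij, by beta_reduce; exact Finset.prod_pair (hne i j)⟩
  · rw [polDiffs_eq k n]
    exact ⟨weak k n, topne k n⟩
  · rw [Ideal.map_span, sq, Ideal.span_mul_span']
    apply le_antisymm
    · rw [Ideal.span_le]
      rintro _ ⟨p, ⟨i, j, hij, rfl⟩, rfl⟩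
      rw [map_mul, rename_X, rename_X]
      exact Ideal.subset_span (Set.mul_mem_mul ⟨i, rfl⟩ ⟨j, rfl⟩)
    · rw [Ideal.span_le]
      rintro p hp
      obtain ⟨_, ⟨i, rfl⟩, _, ⟨j, rfl⟩, rfl⟩ := hp
      beta_reduce
      rcases le_total i j with hij | hij
      · exact Ideal.subset_span ⟨_, ⟨i, j, hij, rfl⟩,
          by rw [map_mul, rename_X, rename_X]⟩
      · rw [show (X i * X j : MvPolynomial (Fin n) k) = X j * X i from mul_comm _ _]
        exact Ideal.subset_span ⟨_, ⟨j, i, hij, rfl⟩,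
          by rw [map_mul, rename_X, rename_X]⟩
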